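/- arXiv:1812.11917 — 3 statements merged into one kernel-verified Lean document; each statement's English description precedes it below -/
import Mathlib

section
/- With Y the entrywise Bernoulli(p)-masked version of X (missing entries set to 0), the covariance satisfies E[(Y-pM)^T(Y-pM)] = p(1-p)·diag(E[X^T X]) + p^2·E[(X-M)^T(X-M)]. -/
open MeasureTheory ProbabilityTheory

private lemma absmul {a b C D : ℝ} (ha : |a| ≤ C) (hb : |b| ≤ D) : |a * b| ≤ C * D := by
  rw [abs_mul]
  exact mul_le_mul ha hb (abs_nonneg b) (le_trans (abs_nonneg a) ha)

private lemma intbdd {Ω : Type*} [MeasurableSpace Ω] {μ : Measure Ω} [IsProbabilityMeasure μ]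
    {f : Ω → ℝ} (hf : Measurable f) (C : ℝ) (h : ∀ ω, |f ω| ≤ C) : Integrable f μ :=
  ⟨hf.aestronglyMeasurable,
    HasFiniteIntegral.of_bounded (C := C) (Filter.Eventually.of_forall h)⟩

private lemma aux_entry {Ω : Type*} [MeasurableSpace Ω] (μ : Measure Ω) [IsProbabilityMeasure μ]
    (p c m1 m2 : ℝ) (x1 x2 e1 e2 : Ω → ℝ)
    (hx1 : Measurable x1) (hx2 : Measurable x2) (he1 : Measurable e1) (he2 : Measurable e2)
    (hbx1 : ∀ ω, |x1 ω| ≤ 1/2) (hbx2 : ∀ ω, |x2 ω| ≤ 1/2)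
    (hbe1 : ∀ ω, |e1 ω| ≤ 1) (hbe2 : ∀ ω, |e2 ω| ≤ 1)
    (hm1 : ∫ ω, x1 ω ∂μ = m1) (hm2 : ∫ ω, x2 ω ∂μ = m2)
    (hprod : ∫ ω, (x1 ω * x2 ω) * (e1 ω * e2 ω) ∂μ = (∫ ω, x1 ω * x2 ω ∂μ) * c)
    (h1 : ∫ ω, x1 ω * e1 ω ∂μ = m1 * p)
    (h2 : ∫ ω, x2 ω * e2 ω ∂μ = m2 * p) :
    (∫ ω, (x1 ω * e1 ω - p * m1) * (x2 ω * e2 ω - p * m2) ∂μ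
      = c * (∫ ω, x1 ω * x2 ω ∂μ) - p^2 * m1 * m2) ∧
    (∫ ω, (x1 ω - m1) * (x2 ω - m2) ∂μ = (∫ ω, x1 ω * x2 ω ∂μ) - m1 * m2) := by
  have i12 : Integrable (fun ω => (x1 ω * x2 ω) * (e1 ω * e2 ω)) μ :=
    intbdd ((hx1.mul hx2).mul (he1.mul he2)) _
      (fun ω => absmul (absmul (hbx1 ω) (hbx2 ω)) (absmul (hbe1 ω) (hbe2 ω)))
  have ig1 : Integrable (fun ω => x1 ω * e1 ω) μ :=
    intbdd (hx1.mul he1) _ (fun ω => absmul (hbx1 ω) (hbe1 ω))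
  have ig2 : Integrable (fun ω => x2 ω * e2 ω) μ :=
    intbdd (hx2.mul he2) _ (fun ω => absmul (hbx2 ω) (hbe2 ω))
  have ix1 : Integrable x1 μ := intbdd hx1 _ hbx1
  have ix2 : Integrable x2 μ := intbdd hx2 _ hbx2
  have ix12 : Integrable (fun ω => x1 ω * x2 ω) μ :=
    intbdd (hx1.mul hx2) _ (fun ω => absmul (hbx1 ω) (hbx2 ω))
  constructor
  · have e : (fun ω => (x1 ω * e1 ω - p * m1) * (x2 ω * e2 ω - p * m2))
        = fun ω => ((x1 ω * x2 ω) * (e1 ω * e2 ω) - (p * m2) * (x1 ω * e1 ω)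
            - (p * m1) * (x2 ω * e2 ω)) + (p * m1) * (p * m2) := by
      funext ω; ring
    have iB : Integrable (fun ω => (x1 ω * x2 ω) * (e1 ω * e2 ω)
        - (p * m2) * (x1 ω * e1 ω)) μ := i12.sub (ig1.const_mul _)
    have iA : Integrable (fun ω => (x1 ω * x2 ω) * (e1 ω * e2 ω)
        - (p * m2) * (x1 ω * e1 ω) - (p * m1) * (x2 ω * e2 ω)) μ := iB.sub (ig2.const_mul _)
    rw [e, integral_add iA (integrable_const _),
      integral_sub iB (ig2.const_mul _),
      integral_sub i12 (ig1.const_mul _), integral_const_mul, integral_const_mul,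
      integral_const, hprod, h1, h2]
    simp [measure_univ]
    ring
  · have e : (fun ω => (x1 ω - m1) * (x2 ω - m2))
        = fun ω => ((x1 ω * x2 ω - m2 * x1 ω) - m1 * x2 ω) + m1 * m2 := by
      funext ω; ring
    have iB : Integrable (fun ω => x1 ω * x2 ω - m2 * x1 ω) μ := ix12.sub (ix1.const_mul _)
    have iA : Integrable (fun ω => x1 ω * x2 ω - m2 * x1 ω - m1 * x2 ω) μ :=
      iB.sub (ix2.const_mul _)
    rw [e, integral_add iA (integrable_const _),
      integral_sub iB (ix2.const_mul _),
      integral_sub ix12 (ix1.const_mul _), integral_const_mul, integral_const_mul,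
      integral_const, hm1, hm2]
    simp [measure_univ]
    ring

/-- With `Y` the entrywise Bernoulli(p)-masked version of `X` (missing entries
set to 0), the covariance satisfies
`E[(Y-pM)ᵀ(Y-pM)] = p(1-p)·diag(E[XᵀX]) + p²·E[(X-M)ᵀ(X-M)]`, stated entrywise. -/
theorem masked_matrix_covariance
    {Ω : Type*} [MeasurableSpace Ω] (μ : Measure Ω) [IsProbabilityMeasure μ]
    {N d : ℕ} (p : ℝ) (hp : p ∈ Set.Icc (0 : ℝ) 1)
    (X E : Ω → Fin N → Fin d → ℝ)
    (hXmeas : Measurable X) (hEmeas : Measurable E)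
    (hXbdd : ∀ ω i j, |X ω i j| ≤ 1/2)
    (hE01 : ∀ ω i j, E ω i j = 0 ∨ E ω i j = 1)
    (hEp : ∀ i j, μ {ω | E ω i j = 1} = ENNReal.ofReal p)
    -- the rows of X are independent
    (hXrows : iIndepFun (fun i ω => X ω i) μ)
    -- the mask entries are mutually independent
    (hEiid : iIndepFun
      (fun (ij : Fin N × Fin d) ω => E ω ij.1 ij.2) μ)
    -- the mask is independent of X
    (hEX : IndepFun E X μ)
    (M : Fin N → Fin d → ℝ) (hM : ∀ i j, M i j = ∫ ω, X ω i j ∂μ) :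
    ∀ j₁ j₂ : Fin d,
      ∫ ω, (∑ i, (X ω i j₁ * E ω i j₁ - p * M i j₁) * (X ω i j₂ * E ω i j₂ - p * M i j₂)) ∂μ
        = p * (1 - p) * (if j₁ = j₂ then ∫ ω, (∑ i, X ω i j₁ * X ω i j₁) ∂μ else 0)
          + p ^ 2 * ∫ ω, (∑ i, (X ω i j₁ - M i j₁) * (X ω i j₂ - M i j₂)) ∂μ := by
  intro j₁ j₂
  have hp0 : (0:ℝ) ≤ p := hp.1
  have hp1 : p ≤ 1 := hp.2
  have hXm : ∀ i j, Measurable fun ω => X ω i j := fun i j =>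
    (measurable_pi_apply j).comp ((measurable_pi_apply i).comp hXmeas)
  have hEm : ∀ i j, Measurable fun ω => E ω i j := fun i j =>
    (measurable_pi_apply j).comp ((measurable_pi_apply i).comp hEmeas)
  have hEb : ∀ ω i j, |E ω i j| ≤ 1 := by
    intro ω i j; rcases hE01 ω i j with h | h <;> simp [h]
  -- expectation of a mask entry
  have intE : ∀ i j, ∫ ω, E ω i j ∂μ = p := by
    intro i j
    have hs : MeasurableSet {ω | E ω i j = 1} := hEm i j (measurableSet_singleton 1)
    have he : (fun ω => E ω i j) = Set.indicator {ω | E ω i j = 1} (fun _ => (1:ℝ)) := by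
      funext ω
      rcases hE01 ω i j with h | h <;> simp [Set.indicator_apply, h]
    rw [he, integral_indicator hs]
    simp [measureReal_def, hEp i j, ENNReal.toReal_ofReal hp0]
  -- product of a function of X and a function of E integrates to a product
  have key : ∀ (φ ψ : (Fin N → Fin d → ℝ) → ℝ), Measurable φ → Measurable ψ →
      ∫ ω, φ (X ω) * ψ (E ω) ∂μ = (∫ ω, φ (X ω) ∂μ) * ∫ ω, ψ (E ω) ∂μ := fun φ ψ hφ hψ =>
    (hEX.symm.comp hφ hψ).integral_fun_mul_eq_mul_integral ((hφ.comp hXmeas).aestronglyMeasurable)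
      ((hψ.comp hEmeas).aestronglyMeasurable)
  have intXE : ∀ i j, ∫ ω, X ω i j * E ω i j ∂μ = M i j * p := by
    intro i j
    rw [key (fun x => x i j) (fun e => e i j)
        ((measurable_pi_apply j).comp (measurable_pi_apply i))
        ((measurable_pi_apply j).comp (measurable_pi_apply i)),
      intE i j, ← hM i j]
  have hMb : ∀ i j, |M i j| ≤ 1/2 := by
    intro i j
    rw [hM i j]
    have := norm_integral_le_of_norm_le_const (μ := μ) (f := fun ω => X ω i j) (C := 1/2)
      (Filter.Eventually.of_forall fun ω => by simpa using hXbdd ω i j)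
    simpa [measure_univ] using this
  -- set the common constant c
  set c : ℝ := if j₁ = j₂ then p else p * p with hc
  have intEE : ∀ i : Fin N, ∫ ω, E ω i j₁ * E ω i j₂ ∂μ = c := by
    intro i
    by_cases hj : j₁ = j₂
    · subst hj
      rw [hc, if_pos rfl]
      have : (fun ω => E ω i j₁ * E ω i j₁) =ᵐ[μ] fun ω => E ω i j₁ :=
        Filter.Eventually.of_forall fun ω => by rcases hE01 ω i j₁ with h | h <;> simp [h]
      rw [integral_congr_ae this, intE]
    · rw [hc, if_neg hj]
      have hne : ((i, j₁) : Fin N × Fin d) ≠ (i, j₂) := fun h => hj (congrArg Prod.snd h)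
      have := (hEiid.indepFun hne).integral_fun_mul_eq_mul_integral
        ((hEm i j₁).aestronglyMeasurable) ((hEm i j₂).aestronglyMeasurable)
      rw [this, intE, intE]
  have intXXE : ∀ i : Fin N,
      ∫ ω, (X ω i j₁ * X ω i j₂) * (E ω i j₁ * E ω i j₂) ∂μ
        = (∫ ω, X ω i j₁ * X ω i j₂ ∂μ) * c := by
    intro i
    rw [key (fun x => x i j₁ * x i j₂) (fun e => e i j₁ * e i j₂)
        (((measurable_pi_apply j₁).comp (measurable_pi_apply i)).fun_mul
          ((measurable_pi_apply j₂).comp (measurable_pi_apply i)))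
        (((measurable_pi_apply j₁).comp (measurable_pi_apply i)).fun_mul
          ((measurable_pi_apply j₂).comp (measurable_pi_apply i))),
      intEE i]
  -- per-row identities
  have main : ∀ i : Fin N,
      (∫ ω, (X ω i j₁ * E ω i j₁ - p * M i j₁) * (X ω i j₂ * E ω i j₂ - p * M i j₂) ∂μ
        = c * (∫ ω, X ω i j₁ * X ω i j₂ ∂μ) - p^2 * M i j₁ * M i j₂) ∧
      (∫ ω, (X ω i j₁ - M i j₁) * (X ω i j₂ - M i j₂) ∂μ
        = (∫ ω, X ω i j₁ * X ω i j₂ ∂μ) - M i j₁ * M i j₂) := fun i =>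
    aux_entry μ p c (M i j₁) (M i j₂) (fun ω => X ω i j₁) (fun ω => X ω i j₂)
      (fun ω => E ω i j₁) (fun ω => E ω i j₂)
      (hXm i j₁) (hXm i j₂) (hEm i j₁) (hEm i j₂)
      (fun ω => hXbdd ω i j₁) (fun ω => hXbdd ω i j₂)
      (fun ω => hEb ω i j₁) (fun ω => hEb ω i j₂)
      (hM i j₁).symm (hM i j₂).symm (intXXE i) (intXE i j₁) (intXE i j₂)
  -- integrability of summands
  have hpb : |p| ≤ 1 := by rwa [abs_of_nonneg hp0]
  have hfac : ∀ ω i (j : Fin d), |X ω i j * E ω i j - p * M i j| ≤ 1 := by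
    intro ω i j
    have h1 : |X ω i j * E ω i j| ≤ 1/2 * 1 := absmul (hXbdd ω i j) (hEb ω i j)
    have h2 : |p * M i j| ≤ 1 * (1/2) := absmul hpb (hMb i j)
    have h3 := abs_sub (X ω i j * E ω i j) (p * M i j)
    linarith
  have hfac' : ∀ ω i (j : Fin d), |X ω i j - M i j| ≤ 1 := by
    intro ω i j
    have h3 := abs_sub (X ω i j) (M i j)
    have := hXbdd ω i j
    have := hMb i j
    linarith
  have iL : ∀ i : Fin N, Integrable
      (fun ω => (X ω i j₁ * E ω i j₁ - p * M i j₁) * (X ω i j₂ * E ω i j₂ - p * M i j₂)) μ :=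
    fun i => intbdd ((((hXm i j₁).mul (hEm i j₁)).sub measurable_const).mul
        (((hXm i j₂).mul (hEm i j₂)).sub measurable_const)) (1 * 1)
      (fun ω => absmul (hfac ω i j₁) (hfac ω i j₂))
  have iC : ∀ i : Fin N, Integrable
      (fun ω => (X ω i j₁ - M i j₁) * (X ω i j₂ - M i j₂)) μ :=
    fun i => intbdd (((hXm i j₁).sub measurable_const).mul ((hXm i j₂).sub measurable_const))
      (1 * 1) (fun ω => absmul (hfac' ω i j₁) (hfac' ω i j₂))
  have iS : ∀ i : Fin N, Integrable (fun ω => X ω i j₁ * X ω i j₁) μ :=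
    fun i => intbdd ((hXm i j₁).mul (hXm i j₁)) _
      (fun ω => absmul (hXbdd ω i j₁) (hXbdd ω i j₁))
  rw [integral_finset_sum _ (fun i _ => iL i), integral_finset_sum _ (fun i _ => iC i)]
  by_cases hj : j₁ = j₂
  · subst hj
    rw [if_pos rfl, integral_finset_sum _ (fun i _ => iS i), Finset.mul_sum, Finset.mul_sum,
      ← Finset.sum_add_distrib]
    refine Finset.sum_congr rfl fun i _ => ?_
    rw [(main i).1, (main i).2, hc, if_pos rfl]
    ring
  · rw [if_neg hj, mul_zero, zero_add, Finset.mul_sum]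
    refine Finset.sum_congr rfl fun i _ => ?_
    rw [(main i).1, (main i).2, hc, if_neg hj]
    ring
end

section
/- The function K(p) giving the phi_2 norm of a centered Bernoulli(p) random variable satisfies 0 ≤ K(p) ≤ 1/4 for all p ∈ [0,1], with the maximum attained at p = 1/2. -/
/-- The φ₂ norm of a centered Bernoulli(p) random variable. -/
noncomputable def bernoulliPhi2 (p : ℝ) : ℝ :=
  if p = 0 ∨ p = 1 then 0
  else if p = 1/2 then 1/4
  else (2 * p - 1) / (2 * Real.log (p / (1 - p)))

lemma aux_f_mono : MonotoneOn (fun x : ℝ => (1+x) * Real.exp (-(2*x)) + x) (Set.Ici 0) := by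
  apply monotoneOn_of_deriv_nonneg (convex_Ici 0)
  · fun_prop
  · intro x _
    apply DifferentiableAt.differentiableWithinAt
    fun_prop
  · intro x _
    have hd : HasDerivAt (fun x : ℝ => (1+x) * Real.exp (-(2*x)) + x)
        (1 * Real.exp (-(2*x)) + (1+x) * (Real.exp (-(2*x)) * (-2)) + 1) x := by
      have h1 : HasDerivAt (fun x : ℝ => -(2*x)) (-2) x := by
        simpa [Pi.neg_def] using ((hasDerivAt_id x).const_mul (2:ℝ)).neg
      have h2 : HasDerivAt (fun x : ℝ => Real.exp (-(2*x))) (Real.exp (-(2*x)) * (-2)) x :=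
        (Real.hasDerivAt_exp _).comp x h1
      have h3 : HasDerivAt (fun x : ℝ => 1 + x) 1 x := by
        simpa using (hasDerivAt_id x).const_add (1:ℝ)
      exact (h3.mul h2).add (hasDerivAt_id x)
    rw [hd.deriv]
    have h4 := Real.add_one_le_exp (2*x)
    have h5 : Real.exp (-(2*x)) * Real.exp (2*x) = 1 := by
      rw [← Real.exp_add]; simp
    have h6 := Real.exp_pos (-(2*x))
    nlinarith [Real.exp_pos (2*x)]

lemma key_ineq (q : ℝ) (hq0 : 0 ≤ q) (hq1 : q < 1) :
    2*q ≤ Real.log ((1+q)/(1-q)) := by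
  have h1q : (0:ℝ) < 1 - q := by linarith
  have hmono := aux_f_mono (Set.self_mem_Ici) (Set.mem_Ici.mpr hq0) hq0
  simp only at hmono
  -- hmono : (1+0)*exp(-(2*0)) + 0 ≤ (1+q)*exp(-(2*q)) + q
  have h0 : (1:ℝ) ≤ (1+q) * Real.exp (-(2*q)) + q := by simpa using hmono
  have hpos : (0:ℝ) < (1+q)/(1-q) := by positivity
  rw [Real.le_log_iff_exp_le hpos, le_div_iff₀ h1q]
  have h5 : Real.exp (-(2*q)) * Real.exp (2*q) = 1 := by
    rw [← Real.exp_add]; simp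
  nlinarith [Real.exp_pos (2*q), Real.exp_pos (-(2*q))]

lemma log_lower (p : ℝ) (hp : 1/2 ≤ p) (hp1 : p < 1) :
    2*(2*p-1) ≤ Real.log (p / (1-p)) := by
  have := key_ineq (2*p-1) (by linarith) (by linarith)
  have heq : (1 + (2*p-1))/(1 - (2*p-1)) = p/(1-p) := by
    rw [show (1:ℝ)+(2*p-1) = 2*p by ring, show (1:ℝ)-(2*p-1) = 2*(1-p) by ring,
      mul_div_mul_left _ _ (two_ne_zero)]
  rwa [heq] at this

/-- The function `K(p)` giving the φ₂ norm of a centered Bernoulli(p)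
random variable satisfies `0 ≤ K(p) ≤ 1/4` on `[0,1]`, with the maximum attained
at `p = 1/2`. -/
theorem bernoulliPhi2_bounds :
    ∀ p ∈ Set.Icc (0 : ℝ) 1,
      0 ≤ bernoulliPhi2 p ∧ bernoulliPhi2 p ≤ 1/4 ∧ bernoulliPhi2 p ≤ bernoulliPhi2 (1/2) := by
  have hhalf : bernoulliPhi2 (1/2) = 1/4 := by
    unfold bernoulliPhi2; norm_num
  intro p hp
  obtain ⟨hp0, hp1⟩ := hp
  rw [hhalf]
  suffices h : 0 ≤ bernoulliPhi2 p ∧ bernoulliPhi2 p ≤ 1/4 by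
    exact ⟨h.1, h.2, h.2⟩
  unfold bernoulliPhi2
  by_cases h01 : p = 0 ∨ p = 1
  · simp [h01]
  · rw [if_neg h01]
    push_neg at h01
    obtain ⟨hne0, hne1⟩ := h01
    have hp0' : 0 < p := lt_of_le_of_ne hp0 (Ne.symm hne0)
    have hp1' : p < 1 := lt_of_le_of_ne hp1 hne1
    by_cases hhalf2 : p = 1/2
    · simp [hhalf2]
    · rw [if_neg hhalf2]
      rcases lt_or_gt_of_ne hhalf2 with hlt | hgt
      · -- p < 1/2 : use symmetry via 1-p
        have hL := log_lower (1-p) (by linarith) (by linarith)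
        have hlog : Real.log (p/(1-p)) = - Real.log ((1-p)/p) := by
          rw [← Real.log_inv]
          congr 1
          field_simp
        have heq : (1-p)/(1-(1-p)) = (1-p)/p := by norm_num
        rw [heq] at hL
        -- hL : 2*(2*(1-p)-1) ≤ log((1-p)/p), i.e. log((1-p)/p) ≥ 2(1-2p) > 0
        have hLneg : Real.log (p/(1-p)) ≤ 2*(2*p-1) := by
          rw [hlog]; linarith
        have hLneg' : Real.log (p/(1-p)) < 0 := by linarith
        constructor
        · exact (div_pos_of_neg_of_neg (by linarith) (by linarith)).le
        · rw [div_le_iff_of_neg (by linarith)]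
          linarith
      · -- p > 1/2
        have hL := log_lower p (by linarith) hp1'
        have hLpos : 0 < Real.log (p/(1-p)) := by linarith
        constructor
        · apply div_nonneg <;> linarith
        · rw [div_le_iff₀ (by linarith)]
          linarith
end

section
/- Let φ be a random permutation of [n] generated by a Random Utility Model (Z_a = u_a + ε_a with independent noise ε_a, items sorted by Z in descending order), and let X = ι(φ) ∈ {±1/2}^{C(n,2)} be its pairwise-comparison embedding. Then the sub-Gaussian norm of X − E[X] is at most C·√(n−1) for an absolute constant C, i.e., for every unit vector v and every t > 0, P(⟨v, X − E X⟩ > t) ≤ exp(−t²/(n−1)). -/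
open MeasureTheory ProbabilityTheory

section Auxiliary

open Real MeasureTheory

lemma hoeffding_scalar (p : ℝ) (hp0 : 0 ≤ p) (hp1 : p ≤ 1) (h : ℝ) :
    1 - p + p * Real.exp h ≤ Real.exp (p * h + h ^ 2 / 8) := by
  set D : ℝ → ℝ := fun x => 1 - p + p * Real.exp x with hDdef
  have hD : ∀ x, 0 < D x := by
    intro x
    have hE := Real.exp_pos x
    have h1 : 0 ≤ p * Real.exp x := mul_nonneg hp0 hE.le
    have h2 : 0 ≤ (1 - p) * (1 - Real.exp x) ∨ True := Or.inr trivial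
    simp only [hDdef]
    nlinarith [mul_nonneg (by linarith : (0:ℝ) ≤ 1 - p) hE.le]
  set φ : ℝ → ℝ := fun x => p * x + x ^ 2 / 8 - Real.log (D x) with hφdef
  set φ' : ℝ → ℝ := fun x => p + x / 4 - p * Real.exp x / D x with hφ'def
  set φ'' : ℝ → ℝ := fun x => 1 / 4 - p * Real.exp x * (1 - p) / (D x) ^ 2 with hφ''def
  have hDdiff : ∀ x, HasDerivAt D (p * Real.exp x) x := fun x =>
    ((Real.hasDerivAt_exp x).const_mul p).const_add (1 - p)
  have hderiv1 : ∀ x, HasDerivAt φ (φ' x) x := by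
    intro x
    have h1 : HasDerivAt (fun x : ℝ => p * x) p x := by
      simpa using (hasDerivAt_id x).const_mul p
    have h2 : HasDerivAt (fun x : ℝ => x ^ 2 / 8) (x / 4) x := by
      have := (hasDerivAt_pow 2 x).div_const 8
      refine this.congr_deriv ?_
      norm_num
      ring
    have h3 : HasDerivAt (fun x => Real.log (D x)) (p * Real.exp x / D x) x :=
      (hDdiff x).log (hD x).ne'
    exact (h1.add h2).sub h3
  have hderiv2 : ∀ x, HasDerivAt φ' (φ'' x) x := by
    intro x
    have h1 : HasDerivAt (fun x : ℝ => p + x / 4) (1 / 4) x := by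
      simpa using ((hasDerivAt_id x).div_const 4).const_add p
    have h2 : HasDerivAt (fun x => p * Real.exp x / D x)
        ((p * Real.exp x * D x - p * Real.exp x * (p * Real.exp x)) / (D x) ^ 2) x :=
      ((Real.hasDerivAt_exp x).const_mul p).div (hDdiff x) (hD x).ne'
    have := h1.sub h2
    refine this.congr_deriv ?_
    have hDx := (hD x).ne'
    simp only [hφ''def, hDdef] at *
    field_simp
    ring
  have hφ''nonneg : ∀ x, 0 ≤ φ'' x := by
    intro x
    have hDx := hD x
    rw [hφ''def]
    have key : p * Real.exp x * (1 - p) / (D x) ^ 2 ≤ 1 / 4 := by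
      rw [div_le_iff₀ (by positivity)]
      have : D x = (1 - p) + p * Real.exp x := rfl
      nlinarith [sq_nonneg ((1 - p) - p * Real.exp x)]
    simp only []
    linarith
  have hφ'0 : φ' 0 = 0 := by
    simp only [hφ'def, hDdef, Real.exp_zero, mul_one]
    field_simp
    ring
  have hφ'mono : Monotone φ' := by
    apply monotone_of_deriv_nonneg
    · exact fun x => (hderiv2 x).differentiableAt
    · intro x
      rw [(hderiv2 x).deriv]
      exact hφ''nonneg x
  have hφ0 : φ 0 = 0 := by
    simp only [hφdef, hDdef, Real.exp_zero, mul_one, Real.log_one]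
    norm_num
  have hφnonneg : 0 ≤ φ h := by
    rcases le_total 0 h with hh | hh
    · have : MonotoneOn φ (Set.Ici 0) := by
        apply monotoneOn_of_deriv_nonneg (convex_Ici 0)
        · exact Continuous.continuousOn (by
            fun_prop (disch := intro x; exact (hD x).ne'))
        · intro x _
          exact (hderiv1 x).differentiableAt.differentiableWithinAt
        · intro x hx
          rw [(hderiv1 x).deriv]
          rw [← hφ'0]
          exact hφ'mono (le_of_lt (by simpa using hx))
      have := this (Set.self_mem_Ici) (Set.mem_Ici.mpr hh) hh
      linarith [hφ0]
    · have : AntitoneOn φ (Set.Iic 0) := by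
        apply antitoneOn_of_deriv_nonpos (convex_Iic 0)
        · exact Continuous.continuousOn (by
            fun_prop (disch := intro x; exact (hD x).ne'))
        · intro x _
          exact (hderiv1 x).differentiableAt.differentiableWithinAt
        · intro x hx
          rw [(hderiv1 x).deriv]
          rw [← hφ'0]
          exact hφ'mono (le_of_lt (by simpa using hx))
      have := this (Set.mem_Iic.mpr hh) Set.self_mem_Iic hh
      linarith [hφ0]
  have : Real.log (D h) ≤ p * h + h ^ 2 / 8 := by
    simp only [hφdef] at hφnonneg
    linarith
  calc 1 - p + p * Real.exp h = D h := rfl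
    _ ≤ Real.exp (p * h + h ^ 2 / 8) := by
        rw [← Real.exp_log (hD h)]
        exact Real.exp_le_exp.mpr this

lemma hoeffding_lemma {α : Type*} [MeasurableSpace α] (ν : Measure α) [IsProbabilityMeasure ν]
    (Y : α → ℝ) (hY : Measurable Y) (a b : ℝ) (ha : ∀ s, a ≤ Y s) (hb : ∀ s, Y s ≤ b)
    (hmean : ∫ s, Y s ∂ν = 0) (l : ℝ) :
    ∫ s, Real.exp (l * Y s) ∂ν ≤ Real.exp (l ^ 2 * (b - a) ^ 2 / 8) := by
  have hYint : Integrable Y ν := by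
    refine ⟨hY.aestronglyMeasurable, HasFiniteIntegral.of_bounded (C := |a| + |b|) ?_⟩
    filter_upwards with s
    rw [Real.norm_eq_abs]
    rcases abs_cases a with ⟨_, _⟩ <;> rcases abs_cases b with ⟨_, _⟩ <;>
      rcases abs_cases (Y s) with ⟨h1, _⟩ <;> have := ha s <;> have := hb s <;> linarith
  have ha0 : a ≤ 0 := by
    have : ∫ _, a ∂ν ≤ ∫ s, Y s ∂ν := integral_mono (integrable_const a) hYint ha
    simpa [hmean] using this
  have hb0 : 0 ≤ b := by
    have : ∫ s, Y s ∂ν ≤ ∫ _, b ∂ν := integral_mono hYint (integrable_const b) hb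
    simpa [hmean] using this
  have hexpint : Integrable (fun s => Real.exp (l * Y s)) ν := by
    refine ⟨(Real.measurable_exp.comp (hY.const_mul l)).aestronglyMeasurable,
      HasFiniteIntegral.of_bounded (C := Real.exp (|l| * (|a| + |b|))) ?_⟩
    filter_upwards with s
    rw [Real.norm_eq_abs, abs_of_pos (Real.exp_pos _)]
    apply Real.exp_le_exp.mpr
    calc l * Y s ≤ |l * Y s| := le_abs_self _
      _ = |l| * |Y s| := abs_mul _ _
      _ ≤ |l| * (|a| + |b|) := by
          apply mul_le_mul_of_nonneg_left _ (abs_nonneg l)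
          rcases abs_cases a with ⟨_, _⟩ <;> rcases abs_cases b with ⟨_, _⟩ <;>
            rcases abs_cases (Y s) with ⟨h1, _⟩ <;> have := ha s <;> have := hb s <;> linarith
  rcases eq_or_lt_of_le (le_trans ha0 hb0) with hab | hab
  · -- a = b = 0, Y ≡ 0
    have ha' : a = 0 := le_antisymm ha0 (hab ▸ hb0)
    have hb' : b = 0 := by rw [← hab, ha']
    have hYzero : ∀ s, Y s = 0 := fun s =>
      le_antisymm (hb' ▸ hb s) (ha' ▸ ha s)
    simp [hYzero, ha', hb']
  · -- a < b
    have hba : (0:ℝ) < b - a := by linarith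
    set p : ℝ := -a / (b - a) with hp
    have hp0 : 0 ≤ p := div_nonneg (by linarith) hba.le
    have hp1 : p ≤ 1 := by
      rw [hp, div_le_one hba]; linarith
    set A : ℝ := (b * Real.exp (l * a) - a * Real.exp (l * b)) / (b - a) with hA
    set B : ℝ := (Real.exp (l * b) - Real.exp (l * a)) / (b - a) with hB
    have hpoint : ∀ s, Real.exp (l * Y s) ≤ A + B * Y s := by
      intro s
      have hw1 : (0:ℝ) ≤ (b - Y s) / (b - a) := div_nonneg (by linarith [hb s]) hba.le
      have hw2 : (0:ℝ) ≤ (Y s - a) / (b - a) := div_nonneg (by linarith [ha s]) hba.le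
      have hwsum : (b - Y s) / (b - a) + (Y s - a) / (b - a) = 1 := by
        field_simp
        ring
      have hconv := convexOn_exp.2 (Set.mem_univ (l * a)) (Set.mem_univ (l * b))
        hw1 hw2 hwsum
      simp only [smul_eq_mul] at hconv
      have harg : (b - Y s) / (b - a) * (l * a) + (Y s - a) / (b - a) * (l * b) = l * Y s := by
        field_simp
        ring
      rw [harg] at hconv
      refine hconv.trans_eq ?_
      simp only [smul_eq_mul, hA, hB]
      field_simp
      ring
    have hABint : Integrable (fun s => A + B * Y s) ν :=
      (integrable_const A).add (hYint.const_mul B)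
    have hint : ∫ s, Real.exp (l * Y s) ∂ν ≤ A := by
      calc ∫ s, Real.exp (l * Y s) ∂ν ≤ ∫ s, A + B * Y s ∂ν :=
            integral_mono hexpint hABint hpoint
        _ = A + B * ∫ s, Y s ∂ν := by
            rw [integral_add (integrable_const A) (hYint.const_mul B),
              integral_const, integral_const_mul]
            simp
        _ = A := by rw [hmean]; ring
    refine hint.trans ?_
    set h : ℝ := l * (b - a) with hh
    have hAeq : A = Real.exp (l * a) * (1 - p + p * Real.exp h) := by
      have : Real.exp (l * a) * Real.exp h = Real.exp (l * b) := by
        rw [← Real.exp_add]; congr 1; rw [hh]; ring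
      rw [hA, hp, ← this]
      field_simp
      ring
    rw [hAeq]
    calc Real.exp (l * a) * (1 - p + p * Real.exp h)
        ≤ Real.exp (l * a) * Real.exp (p * h + h ^ 2 / 8) := by
          apply mul_le_mul_of_nonneg_left (hoeffding_scalar p hp0 hp1 h) (Real.exp_pos _).le
      _ = Real.exp (l * a + (p * h + h ^ 2 / 8)) := by rw [← Real.exp_add]
      _ = Real.exp (l ^ 2 * (b - a) ^ 2 / 8) := by
          congr 1
          have h0 : l * a + p * h = 0 := by
            rw [hp, hh]; field_simp; ring
          have h2 : h ^ 2 = l ^ 2 * (b - a) ^ 2 := by rw [hh]; ring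
          linarith [h0, h2]

lemma integrable_bdd {α : Type*} [MeasurableSpace α] (μ : Measure α) [IsFiniteMeasure μ]
    {h : α → ℝ} (hm : Measurable h) {C : ℝ} (hb : ∀ x, |h x| ≤ C) : Integrable h μ :=
  ⟨hm.aestronglyMeasurable,
    HasFiniteIntegral.of_bounded (C := C) (Filter.Eventually.of_forall fun x => by
      rw [Real.norm_eq_abs]; exact hb x)⟩

lemma mcdiarmid_mgf (n : ℕ) : ∀ (ν : Fin n → Measure ℝ), (∀ i, IsProbabilityMeasure (ν i)) →
    ∀ (f : (Fin n → ℝ) → ℝ), Measurable f → ∀ (M : ℝ), (∀ x, |f x| ≤ M) →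
    ∀ (c : Fin n → ℝ),
    (∀ (i : Fin n) (x x' : Fin n → ℝ), (∀ j, j ≠ i → x j = x' j) → f x - f x' ≤ c i) →
    ∀ l : ℝ,
    ∫ x, Real.exp (l * (f x - ∫ y, f y ∂(Measure.pi ν))) ∂(Measure.pi ν)
      ≤ Real.exp (l ^ 2 * (∑ i, (c i) ^ 2) / 8) := by
  induction n with
  | zero =>
    intro ν hprob f hf M hfM c hc l
    haveI : ∀ i, IsProbabilityMeasure (ν i) := hprob
    haveI : IsProbabilityMeasure (Measure.pi ν) := by infer_instance
    have hxd : ∀ x : Fin 0 → ℝ, f x = f (fun i => i.elim0) := fun x =>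
      congrArg f (Subsingleton.elim _ _)
    have h1 : ∫ y, f y ∂(Measure.pi ν) = f (fun i => i.elim0) := by
      rw [show (fun y => f y) = (fun _ : Fin 0 → ℝ => f (fun i => i.elim0)) from funext hxd]
      simp
    have h2 : (fun x : Fin 0 → ℝ => Real.exp (l * (f x - ∫ y, f y ∂(Measure.pi ν))))
        = fun _ => 1 := by
      funext x
      rw [h1, hxd x]
      simp
    rw [h2]
    simp
  | succ n ih =>
    intro ν hprob f hf M hfM c hc l
    haveI : ∀ i, IsProbabilityMeasure (ν i) := hprob
    haveI : IsProbabilityMeasure (Measure.pi ν) := by infer_instance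
    set ν' : Fin n → Measure ℝ := fun j => ν ((0 : Fin (n+1)).succAbove j) with hν'
    haveI : ∀ j, IsProbabilityMeasure (ν' j) := fun j => hprob _
    haveI : IsProbabilityMeasure (Measure.pi ν') := by infer_instance
    set e := MeasurableEquiv.piFinSuccAbove (fun _ : Fin (n+1) => ℝ) 0 with he
    have mp : MeasurePreserving e (Measure.pi ν) ((ν 0).prod (Measure.pi ν')) :=
      measurePreserving_piFinSuccAbove ν 0
    set P := (ν 0).prod (Measure.pi ν') with hP
    haveI : IsProbabilityMeasure P := by rw [hP]; infer_instance
    set F : ℝ × (Fin n → ℝ) → ℝ := fun z => f (e.symm z) with hF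
    have hFmeas : Measurable F := hf.comp e.symm.measurable
    have hFM : ∀ z, |F z| ≤ M := fun z => hfM _
    have hesymm : ∀ (x₀ : ℝ) (y : Fin n → ℝ),
        e.symm (x₀, y) = (0 : Fin (n+1)).insertNth x₀ y := fun _ _ => rfl
    -- transfer of integrals
    have htrans : ∀ (H : (Fin (n+1) → ℝ) → ℝ), Measurable H →
        ∫ x, H x ∂(Measure.pi ν) = ∫ z, H (e.symm z) ∂P := by
      intro H hH
      rw [← (mp.symm e).integral_comp e.symm.measurableEmbedding]
    set Ef := ∫ y, f y ∂(Measure.pi ν) with hEf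
    have hEfM : |Ef| ≤ M := by
      rw [hEf, ← Real.norm_eq_abs]
      calc ‖∫ y, f y ∂(Measure.pi ν)‖ ≤ M * ((Measure.pi ν) Set.univ).toReal :=
            norm_integral_le_of_norm_le_const (Filter.Eventually.of_forall fun x => by
              rw [Real.norm_eq_abs]; exact hfM x)
        _ = M := by simp
    set g : (Fin n → ℝ) → ℝ := fun y => ∫ x₀, F (x₀, y) ∂(ν 0) with hg
    have hgmeas : Measurable g :=
      (hFmeas.stronglyMeasurable.integral_prod_left').measurable
    have hgM : ∀ y, |g y| ≤ M := by
      intro y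
      rw [hg, ← Real.norm_eq_abs]
      calc ‖∫ x₀, F (x₀, y) ∂(ν 0)‖ ≤ M * ((ν 0) Set.univ).toReal :=
            norm_integral_le_of_norm_le_const (Filter.Eventually.of_forall fun x => by
              rw [Real.norm_eq_abs]; exact hFM _)
        _ = M := by simp
    have hFsecint : ∀ y, Integrable (fun x₀ => F (x₀, y)) (ν 0) := fun y =>
      integrable_bdd _ (hFmeas.comp (measurable_id.prodMk measurable_const))
        (fun x₀ => hFM _)
    -- Ef = ∫ g
    have hEg : ∫ y, g y ∂(Measure.pi ν') = Ef := by
      rw [hEf, htrans f hf]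
      rw [MeasureTheory.integral_prod_symm _ (integrable_bdd P hFmeas hFM)]
    -- bounded differences for g
    have hgc : ∀ (j : Fin n) (y y' : Fin n → ℝ), (∀ k, k ≠ j → y k = y' k) →
        g y - g y' ≤ c ((0 : Fin (n+1)).succAbove j) := by
      intro j y y' hyy'
      rw [hg]
      rw [← integral_sub (hFsecint y) (hFsecint y')]
      calc ∫ x₀, (F (x₀, y) - F (x₀, y')) ∂(ν 0)
          ≤ ∫ _, c ((0 : Fin (n+1)).succAbove j) ∂(ν 0) := by
            apply integral_mono ((hFsecint y).sub (hFsecint y')) (integrable_const _)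
            intro x₀
            simp only [Pi.sub_apply]
            show f (Fin.insertNth 0 x₀ y) - f (Fin.insertNth 0 x₀ y') ≤ _
            apply hc
            intro k hk
            rcases Fin.eq_zero_or_eq_succ k with rfl | ⟨m, rfl⟩
            · rw [Fin.insertNth_apply_same, Fin.insertNth_apply_same]
            · have hm : m ≠ j := by
                intro h; apply hk; rw [h]; simp [Fin.succAbove_zero]
              have h1 : (0 : Fin (n+1)).succAbove m = m.succ := by simp [Fin.succAbove_zero]
              rw [← h1, Fin.insertNth_apply_succAbove, Fin.insertNth_apply_succAbove]
              exact hyy' m hm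
        _ = c ((0 : Fin (n+1)).succAbove j) := by simp
    -- c 0 nonneg not needed; key inner bound
    have hinner : ∀ y : Fin n → ℝ,
        ∫ x₀, Real.exp (l * (F (x₀, y) - Ef)) ∂(ν 0)
          ≤ Real.exp (l ^ 2 * (c 0) ^ 2 / 8) * Real.exp (l * (g y - Ef)) := by
      intro y
      have hsplit : ∀ x₀ : ℝ, Real.exp (l * (F (x₀, y) - Ef))
          = Real.exp (l * (F (x₀, y) - g y)) * Real.exp (l * (g y - Ef)) := by
        intro x₀
        rw [← Real.exp_add]
        congr 1
        ring
      simp only [hsplit]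
      rw [integral_mul_const]
      apply mul_le_mul_of_nonneg_right _ (Real.exp_pos _).le
      -- Hoeffding lemma for Y x₀ = F (x₀, y) - g y
      set Y : ℝ → ℝ := fun x₀ => F (x₀, y) - g y with hY
      have hYmeas : Measurable Y :=
        (hFmeas.comp (measurable_id.prodMk measurable_const)).sub measurable_const
      have hbdd : BddBelow (Set.range fun x₀ => F (x₀, y)) := by
        refine ⟨-M, ?_⟩
        rintro _ ⟨x₀, rfl⟩
        exact (abs_le.mp (hFM (x₀, y))).1
      set a : ℝ := (⨅ x₀ : ℝ, F (x₀, y)) - g y with ha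
      have hYa : ∀ s, a ≤ Y s := fun s => by
        rw [ha, hY]
        have := ciInf_le hbdd s
        simp only []
        linarith
      have hYb : ∀ s, Y s ≤ a + c 0 := by
        intro s
        rw [ha, hY]
        have hkey : F (s, y) - c 0 ≤ ⨅ x₀ : ℝ, F (x₀, y) := by
          apply le_ciInf
          intro s'
          have : F (s, y) - F (s', y) ≤ c 0 := by
            show f (Fin.insertNth 0 s y) - f (Fin.insertNth 0 s' y) ≤ c 0
            apply hc
            intro k hk
            rcases Fin.eq_zero_or_eq_succ k with rfl | ⟨m, rfl⟩
            · exact absurd rfl hk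
            · have h1 : (0 : Fin (n+1)).succAbove m = m.succ := by simp [Fin.succAbove_zero]
              rw [← h1, Fin.insertNth_apply_succAbove, Fin.insertNth_apply_succAbove]
          linarith
        simp only []
        linarith
      have hYmean : ∫ s, Y s ∂(ν 0) = 0 := by
        rw [hY]
        rw [integral_sub (hFsecint y) (integrable_const _)]
        simp [hg]
      have := hoeffding_lemma (ν 0) Y hYmeas a (a + c 0) hYa hYb hYmean l
      calc ∫ x₀, Real.exp (l * (F (x₀, y) - g y)) ∂(ν 0)
          = ∫ s, Real.exp (l * Y s) ∂(ν 0) := by rfl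
        _ ≤ Real.exp (l ^ 2 * (a + c 0 - a) ^ 2 / 8) := this
        _ = Real.exp (l ^ 2 * (c 0) ^ 2 / 8) := by ring_nf
    -- main chain
    have hexpbd : ∀ z : ℝ × (Fin n → ℝ), |Real.exp (l * (F z - Ef))| ≤ Real.exp (|l| * (2 * M)) := by
      intro z
      rw [abs_of_pos (Real.exp_pos _)]
      apply Real.exp_le_exp.mpr
      calc l * (F z - Ef) ≤ |l * (F z - Ef)| := le_abs_self _
        _ = |l| * |F z - Ef| := abs_mul _ _
        _ ≤ |l| * (2 * M) := by
            apply mul_le_mul_of_nonneg_left _ (abs_nonneg l)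
            have h1 := abs_le.mp (hFM z)
            have h2 := abs_le.mp hEfM
            rcases abs_cases (F z - Ef) with ⟨he, _⟩ | ⟨he, _⟩ <;> linarith
    have hintP : Integrable (fun z => Real.exp (l * (F z - Ef))) P :=
      integrable_bdd P (((hFmeas.sub measurable_const).const_mul l).exp) hexpbd
    set K : ℝ := Real.exp (l ^ 2 * (c 0) ^ 2 / 8) with hK
    have step1 : ∫ x, Real.exp (l * (f x - Ef)) ∂(Measure.pi ν)
        = ∫ z, Real.exp (l * (F z - Ef)) ∂P :=
      htrans (fun x => Real.exp (l * (f x - Ef)))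
        (((hf.sub measurable_const).const_mul l).exp)
    have step2 : ∫ z, Real.exp (l * (F z - Ef)) ∂P
        = ∫ y, ∫ x₀, Real.exp (l * (F (x₀, y) - Ef)) ∂(ν 0) ∂(Measure.pi ν') :=
      MeasureTheory.integral_prod_symm _ hintP
    have hleftint : Integrable (fun y => ∫ x₀, Real.exp (l * (F (x₀, y) - Ef)) ∂(ν 0))
        (Measure.pi ν') := hintP.integral_prod_right
    have hrightint : Integrable (fun y => K * Real.exp (l * (g y - Ef))) (Measure.pi ν') := by
      apply Integrable.const_mul
      apply integrable_bdd _ (((hgmeas.sub measurable_const).const_mul l).exp)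
        (C := Real.exp (|l| * (2 * M)))
      intro y
      rw [abs_of_pos (Real.exp_pos _)]
      apply Real.exp_le_exp.mpr
      calc l * (g y - Ef) ≤ |l * (g y - Ef)| := le_abs_self _
        _ = |l| * |g y - Ef| := abs_mul _ _
        _ ≤ |l| * (2 * M) := by
            apply mul_le_mul_of_nonneg_left _ (abs_nonneg l)
            have h1 := abs_le.mp (hgM y)
            have h2 := abs_le.mp hEfM
            rcases abs_cases (g y - Ef) with ⟨he, _⟩ | ⟨he, _⟩ <;> linarith
    have step3 : ∫ y, ∫ x₀, Real.exp (l * (F (x₀, y) - Ef)) ∂(ν 0) ∂(Measure.pi ν')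
        ≤ K * ∫ y, Real.exp (l * (g y - Ef)) ∂(Measure.pi ν') := by
      rw [← integral_const_mul]
      exact integral_mono hleftint hrightint hinner
    have step4 : ∫ y, Real.exp (l * (g y - Ef)) ∂(Measure.pi ν')
        ≤ Real.exp (l ^ 2 * (∑ j : Fin n, (c ((0 : Fin (n+1)).succAbove j)) ^ 2) / 8) := by
      have := ih ν' (fun j => hprob _) g hgmeas M hgM
        (fun j => c ((0 : Fin (n+1)).succAbove j)) hgc l
      rw [hEg] at this
      exact this
    calc ∫ x, Real.exp (l * (f x - Ef)) ∂(Measure.pi ν)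
        = ∫ z, Real.exp (l * (F z - Ef)) ∂P := step1
      _ = ∫ y, ∫ x₀, Real.exp (l * (F (x₀, y) - Ef)) ∂(ν 0) ∂(Measure.pi ν') := step2
      _ ≤ K * ∫ y, Real.exp (l * (g y - Ef)) ∂(Measure.pi ν') := step3
      _ ≤ K * Real.exp (l ^ 2 * (∑ j : Fin n, (c ((0 : Fin (n+1)).succAbove j)) ^ 2) / 8) := by
          apply mul_le_mul_of_nonneg_left step4 (Real.exp_pos _).le
      _ = Real.exp (l ^ 2 * (∑ i, (c i) ^ 2) / 8) := by
          rw [hK, ← Real.exp_add]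
          congr 1
          rw [Fin.sum_univ_succAbove (fun i => (c i) ^ 2) 0]
          ring

lemma pairs_card_le (n : ℕ) (i : Fin n) :
    ((Finset.univ.filter
      (fun q : {q : Fin n × Fin n // q.1 < q.2} => q.1.1 = i ∨ q.1.2 = i))).card ≤ n - 1 := by
  set S := Finset.univ.filter
    (fun q : {q : Fin n × Fin n // q.1 < q.2} => q.1.1 = i ∨ q.1.2 = i) with hS
  have h : ∀ q ∈ S, (if q.1.1 = i then q.1.2 else q.1.1) ∈ Finset.univ.erase i := by
    intro q hq
    have hlt : q.1.1 < q.1.2 := q.2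
    refine Finset.mem_erase.mpr ⟨?_, Finset.mem_univ _⟩
    by_cases h1 : q.1.1 = i
    · rw [if_pos h1]
      intro hcon
      rw [h1, hcon] at hlt
      exact lt_irrefl _ hlt
    · rw [if_neg h1]
      exact h1
  have hinj : Set.InjOn (fun q : {q : Fin n × Fin n // q.1 < q.2} =>
      (if q.1.1 = i then q.1.2 else q.1.1)) S := by
    intro q hq q' hq' heq
    rw [Finset.mem_coe, hS, Finset.mem_filter] at hq hq'
    have hlt : q.1.1 < q.1.2 := q.2
    have hlt' : q'.1.1 < q'.1.2 := q'.2
    simp only [] at heq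
    apply Subtype.ext
    rw [Prod.ext_iff]
    rcases hq.2 with h1 | h2 <;> rcases hq'.2 with h1' | h2'
    · rw [if_pos h1, if_pos h1'] at heq
      exact ⟨h1.trans h1'.symm, heq⟩
    · have hne' : q'.1.1 ≠ i := by
        intro hcon; rw [hcon, h2'] at hlt'; exact lt_irrefl _ hlt'
      rw [if_pos h1, if_neg hne'] at heq
      exfalso
      rw [h1] at hlt
      rw [h2'] at hlt'
      rw [heq] at hlt
      exact lt_irrefl _ (hlt.trans hlt')
    · have hne : q.1.1 ≠ i := by
        intro hcon; rw [hcon, h2] at hlt; exact lt_irrefl _ hlt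
      rw [if_neg hne, if_pos h1'] at heq
      exfalso
      rw [h1'] at hlt'
      rw [h2] at hlt
      rw [← heq] at hlt'
      exact lt_irrefl _ (hlt.trans hlt')
    · have hne : q.1.1 ≠ i := by
        intro hcon; rw [hcon, h2] at hlt; exact lt_irrefl _ hlt
      have hne' : q'.1.1 ≠ i := by
        intro hcon; rw [hcon, h2'] at hlt'; exact lt_irrefl _ hlt'
      rw [if_neg hne, if_neg hne'] at heq
      exact ⟨heq, h2.trans h2'.symm⟩
  calc S.card ≤ (Finset.univ.erase i).card := Finset.card_le_card_of_injOn _ h hinj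
    _ = n - 1 := by rw [Finset.card_erase_of_mem (Finset.mem_univ i)]; simp

lemma pairs_double_count (n : ℕ) (w : {q : Fin n × Fin n // q.1 < q.2} → ℝ) :
    ∑ i : Fin n, ∑ q ∈ Finset.univ.filter
      (fun q : {q : Fin n × Fin n // q.1 < q.2} => q.1.1 = i ∨ q.1.2 = i), w q
      = 2 * ∑ q, w q := by
  have : ∀ i : Fin n, ∑ q ∈ Finset.univ.filter
      (fun q : {q : Fin n × Fin n // q.1 < q.2} => q.1.1 = i ∨ q.1.2 = i), w q
      = ∑ q : {q : Fin n × Fin n // q.1 < q.2}, if q.1.1 = i ∨ q.1.2 = i then w q else 0 :=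
    fun i => (Finset.sum_filter _ _)
  simp only [this]
  rw [Finset.sum_comm]
  rw [Finset.mul_sum]
  apply Finset.sum_congr rfl
  intro q _
  have hne : q.1.1 ≠ q.1.2 := ne_of_lt q.2
  have hsplit : ∀ i : Fin n, (if q.1.1 = i ∨ q.1.2 = i then w q else 0)
      = (if q.1.1 = i then w q else 0) + (if q.1.2 = i then w q else 0) := by
    intro i
    by_cases h1 : q.1.1 = i <;> by_cases h2 : q.1.2 = i
    · exact absurd (h1.trans h2.symm) hne
    · simp [h1, h2]
    · simp [h1, h2]
    · simp [h1, h2]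
  simp only [hsplit]
  rw [Finset.sum_add_distrib, Finset.sum_ite_eq, Finset.sum_ite_eq]
  simp
  ring

end Auxiliary

/-- Let `φ` be a random permutation of `[n]` generated by a Random Utility
Model (`Z_a = u_a + ε_a` with independent noise, items sorted by `Z` in descending order),
and `X = ι(φ) ∈ {±1/2}^{C(n,2)}` its pairwise-comparison embedding, so that
`X_{(a,b)} = 1[Z_a ≤ Z_b] − 1/2` for `a < b`. Then `X − E X` is sub-Gaussian with norm
`O(√(n−1))`: for every unit vector `v` and every `t > 0`,
`P(⟨v, X − E X⟩ > t) ≤ exp(−t²/(n−1))`. -/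
theorem rum_embedding_subgaussian_tail
    {Ω : Type*} [MeasurableSpace Ω] (μ : Measure Ω) [IsProbabilityMeasure μ]
    (n : ℕ) (hn : 2 ≤ n) (u : Fin n → ℝ) (ε : Ω → Fin n → ℝ)
    (hmeas : ∀ a, Measurable fun ω => ε ω a)
    (hindep : iIndepFun (fun a ω => ε ω a) μ)
    (X : Ω → {q : Fin n × Fin n // q.1 < q.2} → ℝ)
    (hX : ∀ ω q, X ω q
      = (if u q.1.1 + ε ω q.1.1 ≤ u q.1.2 + ε ω q.1.2 then (1 : ℝ) else 0) - 1/2)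
    (v : {q : Fin n × Fin n // q.1 < q.2} → ℝ) (hv : ∑ q, (v q) ^ 2 = 1)
    (t : ℝ) (ht : 0 < t) :
    μ {ω | t < ∑ q, v q * (X ω q - ∫ ω', X ω' q ∂μ)}
      ≤ ENNReal.ofReal (Real.exp (-t ^ 2 / ((n : ℝ) - 1))) := by
  classical
  have hn1 : (1:ℝ) ≤ (n:ℝ) - 1 := by
    have : (2:ℝ) ≤ (n:ℝ) := by exact_mod_cast hn
    linarith
  set ν : Fin n → Measure ℝ := fun a => μ.map (fun ω => ε ω a) with hν
  haveI : ∀ a, IsProbabilityMeasure (ν a) := fun a =>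
    Measure.isProbabilityMeasure_map (hmeas a).aemeasurable
  haveI : IsProbabilityMeasure (Measure.pi ν) := by infer_instance
  set E : Ω → (Fin n → ℝ) := fun ω a => ε ω a with hE
  have hEmeas : Measurable E := measurable_pi_lambda _ hmeas
  haveI : ∀ a, SigmaFinite (ν a) := fun a => inferInstance
  have hmap : μ.map E = Measure.pi ν := by
    symm
    apply Measure.pi_eq
    intro s hs
    rw [Measure.map_apply hEmeas (MeasurableSet.univ_pi hs)]
    have hpre : E ⁻¹' (Set.univ.pi s)
        = ⋂ a ∈ (Finset.univ : Finset (Fin n)), (fun ω => ε ω a) ⁻¹' (s a) := by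
      ext ω
      simp [Set.mem_pi, hE]
    rw [hpre, hindep.measure_inter_preimage_eq_mul Finset.univ (fun a _ => hs a)]
    apply Finset.prod_congr rfl
    intro a _
    rw [hν]
    rw [Measure.map_apply (hmeas a) (hs a)]
  -- the embedding coordinates as functions on ℝ^n
  set g : {q : Fin n × Fin n // q.1 < q.2} → (Fin n → ℝ) → ℝ :=
    fun q x => (if u q.1.1 + x q.1.1 ≤ u q.1.2 + x q.1.2 then (1:ℝ) else 0) - 1/2 with hgdef
  have hgmeas : ∀ q, Measurable (g q) := by
    intro q
    apply Measurable.sub _ measurable_const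
    apply Measurable.ite _ measurable_const measurable_const
    exact measurableSet_le ((measurable_pi_apply _).const_add _)
      ((measurable_pi_apply _).const_add _)
  have hgbd : ∀ q x, |g q x| ≤ 1 := by
    intro q x
    simp only [hgdef]
    by_cases h : u q.1.1 + x q.1.1 ≤ u q.1.2 + x q.1.2 <;> simp [h, abs_le] <;> norm_num
  set f : (Fin n → ℝ) → ℝ := fun x => ∑ q, v q * g q x with hfdef
  have hfmeas : Measurable f :=
    Finset.measurable_sum _ (fun q _ => ((hgmeas q).const_mul _))
  set M : ℝ := ∑ q, |v q| with hM
  have hfM : ∀ x, |f x| ≤ M := by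
    intro x
    rw [hfdef, hM]
    calc |∑ q, v q * g q x| ≤ ∑ q, |v q * g q x| := Finset.abs_sum_le_sum_abs _ _
      _ ≤ ∑ q, |v q| := by
          apply Finset.sum_le_sum
          intro q _
          rw [abs_mul]
          calc |v q| * |g q x| ≤ |v q| * 1 :=
                mul_le_mul_of_nonneg_left (hgbd q x) (abs_nonneg _)
            _ = |v q| := mul_one _
  set Si : Fin n → Finset {q : Fin n × Fin n // q.1 < q.2} :=
    fun i => Finset.univ.filter (fun q => q.1.1 = i ∨ q.1.2 = i) with hSi
  set c : Fin n → ℝ := fun i => ∑ q ∈ Si i, |v q| with hcdef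
  have hc : ∀ (i : Fin n) (x x' : Fin n → ℝ), (∀ j, j ≠ i → x j = x' j) → f x - f x' ≤ c i := by
    intro i x x' hxx'
    have hdiff : f x - f x' = ∑ q, v q * (g q x - g q x') := by
      rw [hfdef]
      rw [← Finset.sum_sub_distrib]
      apply Finset.sum_congr rfl
      intro q _
      ring
    rw [hdiff]
    calc ∑ q, v q * (g q x - g q x')
        ≤ ∑ q : {q : Fin n × Fin n // q.1 < q.2},
            (if q.1.1 = i ∨ q.1.2 = i then |v q| else 0) := by
          apply Finset.sum_le_sum
          intro q _
          by_cases hq : q.1.1 = i ∨ q.1.2 = i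
          · rw [if_pos hq]
            have h1 : |g q x - g q x'| ≤ 1 := by
              simp only [hgdef]
              by_cases ha : u q.1.1 + x q.1.1 ≤ u q.1.2 + x q.1.2 <;>
                by_cases hb : u q.1.1 + x' q.1.1 ≤ u q.1.2 + x' q.1.2 <;>
                simp [ha, hb, abs_le] <;> norm_num
            calc v q * (g q x - g q x') ≤ |v q * (g q x - g q x')| := le_abs_self _
              _ = |v q| * |g q x - g q x'| := abs_mul _ _
              _ ≤ |v q| * 1 := mul_le_mul_of_nonneg_left h1 (abs_nonneg _)
              _ = |v q| := mul_one _
          · rw [if_neg hq]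
            push_neg at hq
            have e1 : x q.1.1 = x' q.1.1 := hxx' _ hq.1
            have e2 : x q.1.2 = x' q.1.2 := hxx' _ hq.2
            have hgg : g q x = g q x' := by
              simp only [hgdef]
              rw [e1, e2]
            rw [hgg]
            simp
      _ = c i := by
          simp only [hcdef, hSi, Finset.sum_filter]
  have hcnn : ∀ i, 0 ≤ c i := fun i => Finset.sum_nonneg (fun q _ => abs_nonneg _)
  have hsum : ∑ i, (c i)^2 ≤ 2 * ((n:ℝ) - 1) := by
    have hcard : ∀ i : Fin n, (((Si i).card : ℝ)) ≤ (n:ℝ) - 1 := by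
      intro i
      have h0 := pairs_card_le n i
      have hn1' : 1 ≤ n := le_trans one_le_two hn
      have h1 : (((Si i).card : ℝ)) ≤ ((n - 1 : ℕ) : ℝ) := by
        exact_mod_cast h0
      rwa [Nat.cast_sub hn1', Nat.cast_one] at h1
    have hCS : ∀ i, (c i)^2 ≤ ((n:ℝ)-1) * ∑ q ∈ Si i, (v q)^2 := by
      intro i
      have h2 := Finset.sum_mul_sq_le_sq_mul_sq (Si i) (fun _ => (1:ℝ)) (fun q => |v q|)
      simp only [one_mul, one_pow, sq_abs] at h2
      rw [Finset.sum_const, nsmul_eq_mul, mul_one] at h2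
      have h3 : (c i)^2 ≤ ((Si i).card : ℝ) * ∑ q ∈ Si i, (v q)^2 := by
        rw [hcdef]
        exact h2
      refine h3.trans ?_
      apply mul_le_mul_of_nonneg_right (hcard i)
      exact Finset.sum_nonneg (fun q _ => sq_nonneg _)
    calc ∑ i, (c i)^2 ≤ ∑ i, (((n:ℝ)-1) * ∑ q ∈ Si i, (v q)^2) :=
          Finset.sum_le_sum (fun i _ => hCS i)
      _ = ((n:ℝ)-1) * ∑ i, ∑ q ∈ Si i, (v q)^2 := by rw [Finset.mul_sum]
      _ = ((n:ℝ)-1) * (2 * ∑ q, (v q)^2) := by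
          rw [hSi, pairs_double_count n (fun q => (v q)^2)]
      _ = 2 * ((n:ℝ)-1) := by rw [hv]; ring
  -- transfer means
  have hgint : ∀ q, Integrable (g q) (Measure.pi ν) := fun q =>
    integrable_bdd _ (hgmeas q) (hgbd q)
  have hmean : ∀ q, ∫ ω', X ω' q ∂μ = ∫ x, g q x ∂(Measure.pi ν) := by
    intro q
    have h1 : (fun ω' => X ω' q) = fun ω' => g q (E ω') := by
      funext ω
      rw [hX]
    rw [h1]
    have h2 : ∫ x, g q x ∂(μ.map E) = ∫ ω, g q (E ω) ∂μ :=
      integral_map hEmeas.aemeasurable (hgmeas q).aestronglyMeasurable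
    rw [hmap] at h2
    exact h2.symm
  set Ef := ∫ x, f x ∂(Measure.pi ν) with hEf
  have hEfsum : Ef = ∑ q, v q * ∫ x, g q x ∂(Measure.pi ν) := by
    rw [hEf, hfdef]
    rw [integral_finset_sum _ (fun q _ => (hgint q).const_mul _)]
    apply Finset.sum_congr rfl
    intro q _
    rw [integral_const_mul]
  have hevent : {ω | t < ∑ q, v q * (X ω q - ∫ ω', X ω' q ∂μ)}
      = E ⁻¹' {x | t < f x - Ef} := by
    ext ω
    simp only [Set.mem_setOf_eq, Set.mem_preimage]
    have hkey : ∑ q, v q * (X ω q - ∫ ω', X ω' q ∂μ) = f (E ω) - Ef := by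
      rw [hEfsum, hfdef]
      rw [← Finset.sum_sub_distrib]
      apply Finset.sum_congr rfl
      intro q _
      rw [hmean q, hX]
      ring
    rw [hkey]
  have hA : MeasurableSet {x : Fin n → ℝ | t < f x - Ef} :=
    measurableSet_lt measurable_const (hfmeas.sub measurable_const)
  have hmeasure : μ {ω | t < ∑ q, v q * (X ω q - ∫ ω', X ω' q ∂μ)}
      = Measure.pi ν {x | t < f x - Ef} := by
    rw [hevent, ← hmap, Measure.map_apply hEmeas hA]
  rw [hmeasure]
  -- Chernoff
  set l : ℝ := 2 * t / ((n:ℝ) - 1) with hl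
  have hl0 : 0 ≤ l := by
    apply div_nonneg (by linarith) (by linarith)
  have hmgfbd : mgf (fun x => f x - Ef) (Measure.pi ν) l
      ≤ Real.exp (l^2 * (2*((n:ℝ)-1))/8) := by
    have hb := mcdiarmid_mgf n ν (by infer_instance) f hfmeas M hfM c hc l
    rw [← hEf] at hb
    have h1 : mgf (fun x => f x - Ef) (Measure.pi ν) l
        = ∫ x, Real.exp (l * (f x - Ef)) ∂(Measure.pi ν) := rfl
    rw [h1]
    refine hb.trans ?_
    apply Real.exp_le_exp.mpr
    have := sq_nonneg l
    nlinarith [hsum]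
  have hint : Integrable (fun x => Real.exp (l * (f x - Ef))) (Measure.pi ν) := by
    apply integrable_bdd _ (((hfmeas.sub measurable_const).const_mul l).exp)
      (C := Real.exp (|l| * (M + |Ef|)))
    intro x
    rw [abs_of_pos (Real.exp_pos _)]
    apply Real.exp_le_exp.mpr
    calc l * (f x - Ef) ≤ |l * (f x - Ef)| := le_abs_self _
      _ = |l| * |f x - Ef| := abs_mul _ _
      _ ≤ |l| * (M + |Ef|) := by
          apply mul_le_mul_of_nonneg_left _ (abs_nonneg l)
          have h1 := abs_le.mp (hfM x)
          rcases abs_cases (f x - Ef) with ⟨he, _⟩ | ⟨he, _⟩ <;>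
            rcases abs_cases Ef with ⟨h2, _⟩ | ⟨h2, _⟩ <;> linarith
  have hcher := measure_ge_le_exp_mul_mgf (μ := Measure.pi ν)
    (X := fun x => f x - Ef) (t := l) t hl0 hint
  have hfinal : (Measure.pi ν {x | t ≤ f x - Ef}).toReal
      ≤ Real.exp (-t^2 / ((n:ℝ) - 1)) := by
    refine hcher.trans ?_
    calc Real.exp (-l * t) * mgf (fun x => f x - Ef) (Measure.pi ν) l
        ≤ Real.exp (-l * t) * Real.exp (l^2 * (2*((n:ℝ)-1))/8) :=
          mul_le_mul_of_nonneg_left hmgfbd (Real.exp_pos _).le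
      _ = Real.exp (-l * t + l^2 * (2*((n:ℝ)-1))/8) := by rw [← Real.exp_add]
      _ = Real.exp (-t^2 / ((n:ℝ) - 1)) := by
          congr 1
          rw [hl]
          have hne : ((n:ℝ) - 1) ≠ 0 := by linarith
          field_simp
          ring
  calc Measure.pi ν {x | t < f x - Ef} ≤ Measure.pi ν {x | t ≤ f x - Ef} :=
        measure_mono (fun x hx => le_of_lt (Set.mem_setOf_eq ▸ hx))
    _ = ENNReal.ofReal ((Measure.pi ν {x | t ≤ f x - Ef}).toReal) := by
        rw [ENNReal.ofReal_toReal (measure_ne_top _ _)]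
    _ ≤ ENNReal.ofReal (Real.exp (-t^2 / ((n:ℝ) - 1))) := ENNReal.ofReal_le_ofReal hfinal
end
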